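/- arXiv:2602.11967 — 2 statements merged into one kernel-verified Lean document; each statement's English description precedes it below -/
import Mathlib

section
/- Consider the optimization problem: minimize (a + n·b)/(A + n·B) over A, B > 0, 0 < a ≤ A, 0 < b ≤ B, subject to a·b^n ≥ ((n-1)/n)·A·B^n, where n ≥ 2 is an integer. The infimum of this problem equals (n-1)/n. -/
/-!
Write `c = (n-1)/n`. The constraint forces both `c·A ≤ a` and `c·B ≤ b`: bound the other
factor by its maximum, and for `b` use `bⁿ ≤ b·Bⁿ⁻¹`. Hence the ratio is at least `c`.
Conversely the feasible points `A = t`, `a = c·t`, `B = b = 1` have ratio `(c·t + n)/(t + n)`,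
which tends to `c` as `t → ∞`.
-/

open Filter Topology

section LowerBound

variable {A B a b c : ℝ} {n : ℕ}

theorem mul_le_of_mul_mul_pow_le (hB : 0 < B) (ha : 0 ≤ a) (hb : 0 ≤ b) (hbB : b ≤ B)
    (h : c * A * B ^ n ≤ a * b ^ n) : c * A ≤ a :=
  le_of_mul_le_mul_right
    (h.trans (mul_le_mul_of_nonneg_left (pow_le_pow_left₀ hb hbB n) ha)) (pow_pos hB n)

theorem mul_pow_le_of_mul_mul_pow_le (hA : 0 < A) (haA : a ≤ A) (hb : 0 ≤ b)
    (h : c * A * B ^ n ≤ a * b ^ n) : c * B ^ n ≤ b ^ n := by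
  refine le_of_mul_le_mul_left ?_ hA
  calc A * (c * B ^ n) = c * A * B ^ n := by ring
    _ ≤ a * b ^ n := h
    _ ≤ A * b ^ n := mul_le_mul_of_nonneg_right haA (pow_nonneg hb n)

theorem mul_le_of_mul_pow_le_pow (hn : n ≠ 0) (hB : 0 < B) (hb : 0 ≤ b) (hbB : b ≤ B)
    (h : c * B ^ n ≤ b ^ n) : c * B ≤ b := by
  obtain ⟨m, rfl⟩ := Nat.exists_eq_succ_of_ne_zero hn
  refine le_of_mul_le_mul_right ?_ (pow_pos hB m)
  calc c * B * B ^ m = c * B ^ (m + 1) := by ring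
    _ ≤ b ^ (m + 1) := h
    _ = b * b ^ m := pow_succ' b m
    _ ≤ b * B ^ m := mul_le_mul_of_nonneg_left (pow_le_pow_left₀ hb hbB m) hb

theorem le_add_mul_div_add_mul {w : ℝ} (hw : 0 ≤ w) (hden : 0 < A + w * B)
    (hA : c * A ≤ a) (hB : c * B ≤ b) : c ≤ (a + w * b) / (A + w * B) := by
  rw [le_div_iff₀ hden]
  nlinarith [mul_le_mul_of_nonneg_left hB hw]

theorem le_add_mul_div_add_mul_of_mul_mul_pow_le (hn : n ≠ 0) (hA : 0 < A) (hB : 0 < B)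
    (ha : 0 ≤ a) (haA : a ≤ A) (hb : 0 ≤ b) (hbB : b ≤ B) (h : c * A * B ^ n ≤ a * b ^ n) :
    c ≤ (a + n * b) / (A + n * B) :=
  le_add_mul_div_add_mul n.cast_nonneg (by positivity) (mul_le_of_mul_mul_pow_le hB ha hb hbB h)
    (mul_le_of_mul_pow_le_pow hn hB hb hbB (mul_pow_le_of_mul_mul_pow_le hA haA hb h))

end LowerBound

theorem tendsto_mul_add_div_add (c w : ℝ) :
    Tendsto (fun t : ℝ => (c * t + w) / (t + w)) atTop (𝓝 c) := by
  have hrest : Tendsto (fun t : ℝ => (w - c * w) / (t + w)) atTop (𝓝 0) :=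
    tendsto_const_nhds.div_atTop (tendsto_atTop_add_const_right _ w tendsto_id)
  have heq : (fun t : ℝ => c + (w - c * w) / (t + w)) =ᶠ[atTop] fun t => (c * t + w) / (t + w) := by
    filter_upwards [eventually_gt_atTop (-w)] with t ht
    field_simp [show t + w ≠ 0 by linarith]
    ring
  simpa using (tendsto_const_nhds.add hrest).congr' heq

/-- the infimum of `(a + n·b)/(A + n·B)` over `A, B > 0`,
`0 < a ≤ A`, `0 < b ≤ B` subject to `a·bⁿ ≥ ((n-1)/n)·A·Bⁿ` equals `(n-1)/n`
for every integer `n ≥ 2`. -/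
theorem nash_ratio_infimum (n : ℕ) (hn : 2 ≤ n) :
    sInf {r : ℝ | ∃ A B a b : ℝ, 0 < A ∧ 0 < B ∧ 0 < a ∧ a ≤ A ∧ 0 < b ∧ b ≤ B ∧
        ((n : ℝ) - 1) / n * A * B ^ n ≤ a * b ^ n ∧
        r = (a + n * b) / (A + n * B)} = ((n : ℝ) - 1) / n := by
  set c : ℝ := ((n : ℝ) - 1) / n
  set S := {r : ℝ | ∃ A B a b : ℝ, 0 < A ∧ 0 < B ∧ 0 < a ∧ a ≤ A ∧ 0 < b ∧ b ≤ B ∧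
        c * A * B ^ n ≤ a * b ^ n ∧ r = (a + n * b) / (A + n * B)}
  have hn' : (2 : ℝ) ≤ n := by exact_mod_cast hn
  have hc_pos : 0 < c := div_pos (by linarith) (by linarith)
  have hc_le_one : c ≤ 1 := by rw [div_le_one (by linarith)]; linarith
  have hmem : ∀ t > 0, (c * t + n) / (t + n) ∈ S := fun t ht =>
    ⟨t, 1, c * t, 1, ht, one_pos, mul_pos hc_pos ht,
      mul_le_of_le_one_left ht.le hc_le_one, one_pos, le_rfl, by simp, by simp⟩
  have hlower : ∀ r ∈ S, c ≤ r := by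
    rintro r ⟨A, B, a, b, hA, hB, ha, haA, hb, hbB, h, rfl⟩
    exact le_add_mul_div_add_mul_of_mul_mul_pow_le (by omega) hA hB ha.le haA hb.le hbB h
  refine le_antisymm ?_ (le_csInf ⟨_, hmem 1 one_pos⟩ hlower)
  refine ge_of_tendsto (tendsto_mul_add_div_add c n) ?_
  filter_upwards [eventually_gt_atTop 0] with t ht
  exact csInf_le ⟨c, hlower⟩ (hmem t ht)
end

section
/- For ℓ, p with 0 < ℓ ≤ p < 1, define r(ℓ,p) = (p·ln p - ln ℓ)/(ℓ·ln p - ln ℓ). Then r(ℓ,p) ∈ (0,1] and the infimum of r over 0 < ℓ ≤ p < 1 is at most 0.8532; in particular, at ℓ = 0.325268 and p = 0.589198 one has r(ℓ,p) < 0.8533. -/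
/-!
Since `ℓ ≤ p < 1`, the numerator and denominator of `r(ℓ,p)` differ by `(ℓ - p) ln p ≥ 0`, and the
numerator is at least `(p - 1) ln p > 0`; this gives `r ∈ (0,1]`.

Along `ℓ = q^m`, `p = q^n` the factor `ln q` cancels and `r = (n q^n - m) / (n q^m - m)` is a
rational function of `q`; `(q, m, n) = (0.936, 17, 8)` already gives a value below `0.8532`.

At the given point the claim is linear in `ln p` and `ln ℓ = 2 ln p + ln (ℓ / p²)`, and `ℓ / p²` is
close to `1`, so a few terms of the series `-ln (1 - x) = ∑ xᵏ / k` bound both logarithms well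
enough.
-/

open Set

/-- The revenue approximation ratio of the best single posted price in the hard
quasi-regular instance with parameters `ℓ ≤ p`. -/
noncomputable def hardRatio (ℓ p : ℝ) : ℝ :=
  (p * Real.log p - Real.log ℓ) / (ℓ * Real.log p - Real.log ℓ)

open Real

lemma sum_range_le_neg_log {y : ℝ} (hy₀ : 0 < y) (hy₁ : y ≤ 1) (n : ℕ) :
    ∑ i ∈ Finset.range n, (1 - y) ^ (i + 1) / (i + 1) ≤ -log y := by
  have hx : |1 - y| < 1 := by rw [abs_lt]; constructor <;> linarith
  have hsum := hasSum_pow_div_log_of_abs_lt_one hx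
  rw [sub_sub_cancel] at hsum
  exact sum_le_hasSum _ (fun i _ => div_nonneg (pow_nonneg (by linarith) _) (by positivity)) hsum

lemma neg_log_le_sum_range_add {y : ℝ} (hy₀ : 0 < y) (hy₁ : y ≤ 1) (n : ℕ) :
    -log y ≤ ∑ i ∈ Finset.range n, (1 - y) ^ (i + 1) / (i + 1) + (1 - y) ^ (n + 1) / y := by
  have hx : |1 - y| < 1 := by rw [abs_lt]; constructor <;> linarith
  have hrem := abs_log_sub_add_sum_range_le hx n
  rw [sub_sub_cancel, abs_of_nonneg (by linarith : 0 ≤ 1 - y), sub_sub_cancel] at hrem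
  linarith [(abs_le.1 hrem).1]

section Ratio

variable {ℓ p : ℝ}

lemma hardRatio_num_pos (hℓ : 0 < ℓ) (hℓp : ℓ ≤ p) (hp : p < 1) :
    0 < p * log p - log ℓ := by
  have hlogp : log p < 0 := log_neg (hℓ.trans_le hℓp) hp
  have hlogℓ : log ℓ ≤ log p := log_le_log hℓ hℓp
  nlinarith

lemma hardRatio_num_le_denom (hℓ : 0 < ℓ) (hℓp : ℓ ≤ p) (hp : p ≤ 1) :
    p * log p - log ℓ ≤ ℓ * log p - log ℓ := by
  have hlogp : log p ≤ 0 := log_nonpos (hℓ.trans_le hℓp).le hp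
  nlinarith

lemma hardRatio_denom_pos (hℓ : 0 < ℓ) (hℓp : ℓ ≤ p) (hp : p < 1) :
    0 < ℓ * log p - log ℓ :=
  (hardRatio_num_pos hℓ hℓp hp).trans_le (hardRatio_num_le_denom hℓ hℓp hp.le)

lemma hardRatio_mem_Ioc (hℓ : 0 < ℓ) (hℓp : ℓ ≤ p) (hp : p < 1) : hardRatio ℓ p ∈ Ioc (0:ℝ) 1 :=
  ⟨div_pos (hardRatio_num_pos hℓ hℓp hp) (hardRatio_denom_pos hℓ hℓp hp),
    div_le_one_of_le₀ (hardRatio_num_le_denom hℓ hℓp hp.le) (hardRatio_denom_pos hℓ hℓp hp).le⟩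

lemma sInf_hardRatio_le (hℓ : 0 < ℓ) (hℓp : ℓ ≤ p) (hp : p < 1) :
    sInf {r : ℝ | ∃ ℓ p : ℝ, 0 < ℓ ∧ ℓ ≤ p ∧ p < 1 ∧ r = hardRatio ℓ p} ≤ hardRatio ℓ p := by
  refine csInf_le ⟨0, ?_⟩ ⟨ℓ, p, hℓ, hℓp, hp, rfl⟩
  rintro _ ⟨ℓ', p', hℓ', hℓp', hp', rfl⟩
  exact (hardRatio_mem_Ioc hℓ' hℓp' hp').1.le

end Ratio

lemma hardRatio_pow_pow {q : ℝ} (hq₀ : 0 < q) (hq₁ : q ≠ 1) (m n : ℕ) :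
    hardRatio (q ^ m) (q ^ n) = (n * q ^ n - m) / (n * q ^ m - m) := by
  have hlogq : log q ≠ 0 := log_ne_zero_of_pos_of_ne_one hq₀ hq₁
  calc hardRatio (q ^ m) (q ^ n) = ((n * q ^ n - m) * log q) / ((n * q ^ m - m) * log q) := by
        rw [hardRatio, log_pow, log_pow]; ring_nf
    _ = _ := mul_div_mul_right _ _ hlogq

lemma sInf_hardRatio_le_8532 :
    sInf {r : ℝ | ∃ ℓ p : ℝ, 0 < ℓ ∧ ℓ ≤ p ∧ p < 1 ∧ r = hardRatio ℓ p} ≤ 0.8532 := by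
  have hℓp : (0.936 : ℝ) ^ 17 ≤ 0.936 ^ 8 :=
    pow_le_pow_of_le_one (by norm_num) (by norm_num) (by norm_num)
  calc _ ≤ hardRatio (0.936 ^ 17) (0.936 ^ 8) := sInf_hardRatio_le (by positivity) hℓp (by norm_num)
    _ = (8 * 0.936 ^ 8 - 17) / (8 * 0.936 ^ 17 - 17) := by
      rw [hardRatio_pow_pow (by norm_num) (by norm_num)]; norm_num
    _ ≤ 0.8532 := by rw [div_le_iff_of_neg (by norm_num)]; norm_num

lemma hardRatio_lt_8533 : hardRatio 0.325268 0.589198 < 0.8533 := by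
  set ℓ : ℝ := 0.325268
  set p : ℝ := 0.589198
  have hlogp : 0.5285 ≤ -log p :=
    le_trans (by norm_num [Finset.sum_range_succ]) (sum_range_le_neg_log (by norm_num) (by norm_num) 6)
  have hlogt : -log (ℓ / p ^ 2) ≤ 0.0653 :=
    (neg_log_le_sum_range_add (by norm_num) (by norm_num) 2).trans (by norm_num [Finset.sum_range_succ])
  have hsplit : log ℓ = 2 * log p + log (ℓ / p ^ 2) := by
    rw [log_div (by norm_num) (by norm_num), log_pow]; push_cast; ring
  rw [hardRatio, div_lt_iff₀ (hardRatio_denom_pos (by norm_num) (by norm_num) (by norm_num))]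
  linarith

/-- for all `0 < ℓ ≤ p < 1`, `r(ℓ,p) ∈ (0,1]`, the infimum of
`r` over this region is at most `0.8532`, and at `ℓ = 0.325268`,
`p = 0.589198` one has `r(ℓ,p) < 0.8533`. -/
theorem hard_ratio_bounds :
    (∀ ℓ p : ℝ, 0 < ℓ → ℓ ≤ p → p < 1 → hardRatio ℓ p ∈ Ioc (0:ℝ) 1) ∧
    sInf {r : ℝ | ∃ ℓ p : ℝ, 0 < ℓ ∧ ℓ ≤ p ∧ p < 1 ∧ r = hardRatio ℓ p} ≤ 0.8532 ∧
    hardRatio 0.325268 0.589198 < 0.8533 :=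
  ⟨fun _ _ => hardRatio_mem_Ioc, sInf_hardRatio_le_8532, hardRatio_lt_8533⟩
end
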